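/- Let (V_k) be a nonnegative real sequence, σ > 0, C ≥ 0, and α_k = 4/(σk). Suppose for all k ≥ K* that (σ k(k-2)/8) V_k - (σ k²/8) V_{k+1} + C ln(σ k/4) ≥ 0 with ln(σk/4) ≥ 0. Then for all k ≥ K*, V_{k+1} ≤ (K*(K*-2)/k²) V_{K*} + (8C/(σ k²)) Σ_{t=K*}^{k} ln(σ t/4). -/
import Mathlib

theorem stmt_8 (V : ℕ → ℝ) (σ C : ℝ) (hσ : 0 < σ) (hC : 0 ≤ C)
    (hV : ∀ k, 0 ≤ V k) (K : ℕ) (hK : 1 ≤ K)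
    (h : ∀ k : ℕ, K ≤ k →
      0 ≤ σ * k * ((k : ℝ) - 2) / 8 * V k - σ * (k : ℝ) ^ 2 / 8 * V (k + 1)
          + C * Real.log (σ * k / 4) ∧ 0 ≤ Real.log (σ * k / 4)) :
    ∀ k : ℕ, K ≤ k →
      V (k + 1) ≤ (K : ℝ) * ((K : ℝ) - 2) / (k : ℝ) ^ 2 * V K
        + 8 * C / (σ * (k : ℝ) ^ 2) * ∑ t ∈ Finset.Icc K k, Real.log (σ * t / 4) := by
  -- key step lemma: k² V_{k+1} ≤ k(k-2) V_k + (8C/σ) log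
  have step : ∀ k : ℕ, K ≤ k →
      (k : ℝ) ^ 2 * V (k + 1) ≤ (k : ℝ) * ((k : ℝ) - 2) * V k
        + 8 * C / σ * Real.log (σ * k / 4) := by
    intro k hk
    have h1 := (h k hk).1
    have hσ' := hσ.ne'
    rw [div_mul_eq_mul_div, div_mul_eq_mul_div, ← sub_div] at h1
    have h2 : 0 ≤ σ * k * ((k : ℝ) - 2) * V k - σ * (k : ℝ) ^ 2 * V (k + 1)
        + 8 * (C * Real.log (σ * k / 4)) := by nlinarith
    have h3 : σ * ((k:ℝ)^2 * V (k+1)) ≤ σ * ((k:ℝ) * ((k:ℝ) - 2) * V k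
        + 8 * C / σ * Real.log (σ * k / 4)) := by
      field_simp
      nlinarith
    exact le_of_mul_le_mul_left h3 hσ
  -- main accumulation by induction
  have main : ∀ k : ℕ, K ≤ k →
      (k : ℝ) ^ 2 * V (k + 1) ≤ (K : ℝ) * ((K : ℝ) - 2) * V K
        + 8 * C / σ * ∑ t ∈ Finset.Icc K k, Real.log (σ * t / 4) := by
    intro k hk
    induction k with
    | zero => omega
    | succ n ih =>
      rcases Nat.lt_or_ge K (n + 1) with hlt | hge
      · have hKn : K ≤ n := by omega
        have ihn := ih hKn
        have hst := step (n + 1) (by omega)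
        have hsum' : ∑ t ∈ Finset.Icc K (n + 1), Real.log (σ * (t:ℝ) / 4)
            = (∑ t ∈ Finset.Icc K n, Real.log (σ * (t:ℝ) / 4)) + Real.log (σ * ((n+1:ℕ):ℝ) / 4) :=
          Finset.sum_Icc_succ_top (by omega) _
        have hlog := (h (n+1) (by omega)).2
        have hVn := hV (n + 1)
        rw [hsum']
        push_cast at hst ⊢
        nlinarith [hst, ihn, mul_nonneg hC hlog]
      · -- K = n + 1 : base case
        have hKe : K = n + 1 := by omega
        subst hKe
        have hst := step (n + 1) le_rfl
        simpa using hst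
  -- divide by k²
  intro k hk
  have hk0 : 0 < (k : ℝ) := by exact_mod_cast Nat.lt_of_lt_of_le Nat.zero_lt_one (hK.trans hk)
  have hk2 : 0 < (k : ℝ) ^ 2 := by positivity
  have hm := main k hk
  calc V (k+1) ≤ ((K : ℝ) * ((K : ℝ) - 2) * V K
        + 8 * C / σ * ∑ t ∈ Finset.Icc K k, Real.log (σ * t / 4)) / (k:ℝ)^2 := by
        rw [le_div_iff₀ hk2]; linarith [hm]
    _ = (K : ℝ) * ((K : ℝ) - 2) / (k : ℝ) ^ 2 * V K
        + 8 * C / (σ * (k : ℝ) ^ 2) * ∑ t ∈ Finset.Icc K k, Real.log (σ * t / 4) := by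
        field_simp
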